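/- Let S₀ determine a strictly weak, left invariant sub-Finsler metric on a Hilbertian H-type group M = V ⊕ W. Then for all x, y ∈ V and z₁, z₂ ∈ W one has ρ_S(x + z₁, y + z₂) = 0 if and only if x = y. -/

import Mathlib

open scoped RealInnerProductSpace

/-- A Hilbertian H-type group: a real Hilbert space `M` with an orthogonal decomposition
`M = V ⊕ W` into nontrivial closed subspaces, `W` finite dimensional, a continuous
skew-symmetric Lie bracket with `[M,M] ⊆ W`, `[M,W] = 0`, and the map `J` determined by
`⟪J z x, y⟫ = ⟪z, [x,y]⟫` satisfying `J_z ∘ J_z = -‖z‖² id` on `V`. -/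
structure HTypeGroup (M : Type*) [NormedAddCommGroup M] [InnerProductSpace ℝ M]
    [CompleteSpace M] where
  V : Submodule ℝ M
  W : Submodule ℝ M
  V_closed : IsClosed (V : Set M)
  W_closed : IsClosed (W : Set M)
  V_nontrivial : V ≠ ⊥
  W_nontrivial : W ≠ ⊥
  W_findim : FiniteDimensional ℝ ↥W
  orthogonal : ∀ v ∈ V, ∀ w ∈ W, ⟪v, w⟫ = 0
  proj1 : M →L[ℝ] M
  proj2 : M →L[ℝ] M
  proj1_mem : ∀ v : M, proj1 v ∈ V
  proj2_mem : ∀ v : M, proj2 v ∈ W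
  proj_add : ∀ v : M, proj1 v + proj2 v = v
  bracket : M →L[ℝ] M →L[ℝ] M
  bracket_skew : ∀ u v : M, bracket u v = - bracket v u
  bracket_mem_W : ∀ u v : M, bracket u v ∈ W
  bracket_W : ∀ u : M, ∀ w ∈ W, bracket u w = 0
  Jmap : M →L[ℝ] M →L[ℝ] M
  Jmap_mem_V : ∀ z ∈ W, ∀ x ∈ V, Jmap z x ∈ V
  Jmap_inner : ∀ z ∈ W, ∀ x ∈ V, ∀ y ∈ V, ⟪Jmap z x, y⟫ = ⟪z, bracket x y⟫
  Jmap_sq : ∀ z ∈ W, ∀ x ∈ V, Jmap z (Jmap z x) = -(‖z‖ ^ 2) • x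

/-- A continuous, piecewise continuously differentiable curve on `[0,1]`: a continuous
curve together with a derivative function which is the honest derivative away from a
finite exceptional set, and which is interval integrable. -/
structure PC1Curve (M : Type*) [NormedAddCommGroup M] [NormedSpace ℝ M] where
  toFun : ℝ → M
  deriv : ℝ → M
  continuousOn : ContinuousOn toFun (Set.Icc 0 1)
  exc : Set ℝ
  exc_finite : exc.Finite
  hasDeriv : ∀ t ∈ Set.Ioo (0 : ℝ) 1 \ exc, HasDerivAt toFun (deriv t) t
  deriv_integrable : IntervalIntegrable deriv MeasureTheory.volume 0 1

/-- A horizontal curve: a piecewise `C¹` curve `γ = γ₁ + γ₂` (with `γᵢ = πᵢ ∘ γ`) such that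
`γ₂'(t) = (1/2)[γ₁(t), γ₁'(t)]` wherever the derivative exists. -/
def IsHorizontal {M : Type*} [NormedAddCommGroup M] [InnerProductSpace ℝ M]
    [CompleteSpace M] (H : HTypeGroup M) (γ : PC1Curve M) : Prop :=
  ∀ t ∈ Set.Ioo (0 : ℝ) 1 \ γ.exc,
    H.proj2 (γ.deriv t) = (2⁻¹ : ℝ) • H.bracket (H.proj1 (γ.toFun t)) (H.proj1 (γ.deriv t))

/-- The sub-Finsler length `ℓ_S(γ) = ∫₀¹ S₀(γ₁'(t)) dt` of a curve, with respect to the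
left invariant sub-Finsler metric determined by the norm `S₀` on `V`. -/
noncomputable def subFinslerLength {M : Type*} [NormedAddCommGroup M] [InnerProductSpace ℝ M]
    [CompleteSpace M] (H : HTypeGroup M) (S₀ : M → ℝ) (γ : PC1Curve M) : ℝ :=
  ∫ t in (0 : ℝ)..1, S₀ (H.proj1 (γ.deriv t))

/-- The sub-Finsler distance `ρ_S(p, q)`: the infimum of the sub-Finsler lengths of
horizontal curves joining `p` to `q`. -/
noncomputable def subFinslerDist {M : Type*} [NormedAddCommGroup M] [InnerProductSpace ℝ M]
    [CompleteSpace M] (H : HTypeGroup M) (S₀ : M → ℝ) (p q : M) : ℝ :=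
  sInf {L : ℝ | ∃ γ : PC1Curve M, IsHorizontal H γ ∧ γ.toFun 0 = p ∧ γ.toFun 1 = q ∧
    L = subFinslerLength H S₀ γ}

/-!
Lengths are measured by the seminorm `q = S₀ ∘ π₁` on `M`. Along any curve the difference of the
endpoints is the integral of `γ'`, so Jensen's inequality bounds the length of every curve from
`x + z₁` to `y + z₂` below by `S₀ (y - x)`; as `S₀` is definite, `ρ_S = 0` forces `x = y`.

Conversely, explicit horizontal curves join any two points: move along `y - x` while running a
closed loop in the plane of `v, u ∈ V`, whose enclosed area contributes a multiple of `[v, u]` to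
the `W`-component. The H-type identity `[v, J_w v] = ‖v‖² w` gives `u` with `[v, u]` prescribed and
`‖u‖ ∼ 1 / ‖v‖`, so the loop costs about `S₀ v + c₀ / ‖v‖`. Strict weakness provides `v` with
`S₀ v` small and `‖v‖` large, hence `ρ_S (x + z₁, x + z₂) = 0`.
-/

open Real MeasureTheory Set

lemma apply_zero_of_abs_homogeneous {E : Type*} [AddCommGroup E] [Module ℝ E]
    {V : Submodule ℝ E} {S₀ : E → ℝ} (hS_smul : ∀ (c : ℝ), ∀ v ∈ V, S₀ (c • v) = |c| * S₀ v) :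
    S₀ 0 = 0 := by
  simpa using hS_smul 0 0 V.zero_mem

lemma exists_mem_lt_and_mul_norm_eq_one {E : Type*} [NormedAddCommGroup E] [NormedSpace ℝ E]
    {V : Submodule ℝ E} {S₀ : E → ℝ} (hS_smul : ∀ (c : ℝ), ∀ v ∈ V, S₀ (c • v) = |c| * S₀ v)
    (h_strictly_weak : ¬ ∃ c > (0 : ℝ), ∀ v ∈ V, c * ‖v‖ ≤ S₀ v) {ε : ℝ} (hε : 0 < ε) :
    ∃ v ∈ V, S₀ v < ε ∧ ε * ‖v‖ = 1 := by
  push Not at h_strictly_weak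
  obtain ⟨v, hv, hlt⟩ := h_strictly_weak (ε ^ 2) (by positivity)
  have hv0 : v ≠ 0 := by
    rintro rfl
    simp [apply_zero_of_abs_homogeneous hS_smul] at hlt
  have hnv : 0 < ‖v‖ := norm_pos_iff.mpr hv0
  refine ⟨(ε * ‖v‖)⁻¹ • v, V.smul_mem _ hv, ?_, ?_⟩
  · rw [hS_smul _ _ hv, abs_of_pos (by positivity), inv_mul_lt_iff₀ (by positivity)]
    nlinarith
  · rw [norm_smul, norm_inv, norm_mul, norm_norm, Real.norm_of_nonneg hε.le]
    field_simp

def PC1Curve.ofHasDerivAt {E : Type*} [NormedAddCommGroup E] [NormedSpace ℝ E] {f f' : ℝ → E}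
    (hf : ∀ t, HasDerivAt f (f' t) t) (hf' : Continuous f') : PC1Curve E where
  toFun := f
  deriv := f'
  continuousOn := (continuous_iff_continuousAt.2 fun t => (hf t).continuousAt).continuousOn
  exc := ∅
  exc_finite := finite_empty
  hasDeriv t _ := hf t
  deriv_integrable := hf'.intervalIntegrable 0 1

theorem PC1Curve.seminorm_sub_le_integral {E : Type*} [NormedAddCommGroup E] [NormedSpace ℝ E]
    [CompleteSpace E] (γ : PC1Curve E) {q : Seminorm ℝ E} (hq : Continuous q) :
    q (γ.toFun 1 - γ.toFun 0) ≤ ∫ t in (0 : ℝ)..1, q (γ.deriv t) := by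
  obtain ⟨C, -, hC⟩ := q.bound_of_continuous_normedSpace hq
  let μ : Measure ℝ := volume.restrict (Ioc 0 1)
  have : IsProbabilityMeasure μ := ⟨by simp [μ]⟩
  have hint : Integrable γ.deriv μ :=
    (intervalIntegrable_iff_integrableOn_Ioc_of_le zero_le_one).mp γ.deriv_integrable
  have hqint : Integrable (q ∘ γ.deriv) μ :=
    (hint.norm.const_mul C).mono' (hq.comp_aestronglyMeasurable hint.aestronglyMeasurable)
      (ae_of_all _ fun t => by simpa [abs_of_nonneg (apply_nonneg q _)] using hC (γ.deriv t))
  have hftc : ∫ t in (0 : ℝ)..1, γ.deriv t = γ.toFun 1 - γ.toFun 0 :=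
    integral_eq_of_hasDerivAt_off_countable_of_le _ _ zero_le_one γ.exc_finite.countable
      γ.continuousOn γ.hasDeriv γ.deriv_integrable
  rw [← hftc, intervalIntegral.integral_of_le zero_le_one,
    intervalIntegral.integral_of_le zero_le_one]
  exact q.convexOn.map_integral_le hq.continuousOn isClosed_univ
    (ae_of_all _ fun _ => mem_univ _) hint hqint

/- A closed planar loop `(loopX, loopY)` on `[0, 1]`, with explicit primitives of the coefficients
of `[a, a']` for `a t = t • e + loopX t • v + loopY t • u` (see `bracket_loopPath`). Both
coordinates have mean zero, so the primitives `loopMomentX`, `loopMomentY` of `t x' - x`,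
`t y' - y` vanish at `t = 1`, and only the enclosed signed area `loopArea 1 = -π / 2` survives. -/

noncomputable def loopX (t : ℝ) : ℝ := sin (2 * π * t)
noncomputable def loopXDeriv (t : ℝ) : ℝ := 2 * π * cos (2 * π * t)
noncomputable def loopY (t : ℝ) : ℝ := sin (2 * π * t) ^ 2 * cos (2 * π * t)
noncomputable def loopYDeriv (t : ℝ) : ℝ :=
  2 * π * (2 * sin (2 * π * t) * cos (2 * π * t) ^ 2 - sin (2 * π * t) ^ 3)
noncomputable def loopMomentX (t : ℝ) : ℝ := t * sin (2 * π * t) + (cos (2 * π * t) - 1) / π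
noncomputable def loopMomentY (t : ℝ) : ℝ := t * loopY t - sin (2 * π * t) ^ 3 / (3 * π)
noncomputable def loopArea (t : ℝ) : ℝ :=
  -(π / 2) * t + sin (4 * π * t) / 4 - sin (8 * π * t) / 16

lemma hasDerivAt_sin_mul (c t : ℝ) : HasDerivAt (fun s => sin (c * s)) (c * cos (c * t)) t := by
  simpa [mul_comm] using ((hasDerivAt_id t).const_mul c).sin

lemma hasDerivAt_cos_mul (c t : ℝ) :
    HasDerivAt (fun s => cos (c * s)) (-(c * sin (c * t))) t := by
  simpa [mul_comm] using ((hasDerivAt_id t).const_mul c).cos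

lemma hasDerivAt_loopX (t : ℝ) : HasDerivAt loopX (loopXDeriv t) t :=
  hasDerivAt_sin_mul _ t

lemma hasDerivAt_loopY (t : ℝ) : HasDerivAt loopY (loopYDeriv t) t :=
  (((hasDerivAt_sin_mul (2 * π) t).fun_pow 2).mul (hasDerivAt_cos_mul (2 * π) t)).congr_deriv
    (by simp only [loopYDeriv]; ring)

lemma hasDerivAt_loopMomentX (t : ℝ) :
    HasDerivAt loopMomentX (t * loopXDeriv t - loopX t) t :=
  (((hasDerivAt_id t).mul (hasDerivAt_sin_mul (2 * π) t)).add
    (((hasDerivAt_cos_mul (2 * π) t).sub_const 1).div_const π)).congr_deriv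
    (by simp only [loopXDeriv, loopX, id]; field_simp; ring)

lemma hasDerivAt_loopMomentY (t : ℝ) :
    HasDerivAt loopMomentY (t * loopYDeriv t - loopY t) t :=
  (((hasDerivAt_id t).mul (hasDerivAt_loopY t)).sub
    (((hasDerivAt_sin_mul (2 * π) t).fun_pow 3).div_const (3 * π))).congr_deriv
    (by simp only [loopYDeriv, loopY, id]; field_simp; ring)

lemma hasDerivAt_loopArea (t : ℝ) :
    HasDerivAt loopArea (loopX t * loopYDeriv t - loopY t * loopXDeriv t) t := by
  refine ((((hasDerivAt_id t).const_mul (-(π / 2))).add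
    ((hasDerivAt_sin_mul (4 * π) t).div_const 4)).sub
    ((hasDerivAt_sin_mul (8 * π) t).div_const 16)).congr_deriv ?_
  have h4 : cos (4 * π * t) = 2 * cos (2 * π * t) ^ 2 - 1 := by
    rw [show 4 * π * t = 2 * (2 * π * t) by ring, cos_two_mul]
  have h8 : cos (8 * π * t) = 2 * cos (4 * π * t) ^ 2 - 1 := by
    rw [show 8 * π * t = 2 * (4 * π * t) by ring, cos_two_mul]
  simp only [loopX, loopY, loopXDeriv, loopYDeriv, h8, h4]
  linear_combination 2 * π * (1 + sin (2 * π * t) ^ 2 - 2 * cos (2 * π * t) ^ 2) *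
    sin_sq_add_cos_sq (2 * π * t)

lemma loopX_zero : loopX 0 = 0 := by simp [loopX]
lemma loopY_zero : loopY 0 = 0 := by simp [loopY]
lemma loopMomentX_zero : loopMomentX 0 = 0 := by simp [loopMomentX]
lemma loopMomentY_zero : loopMomentY 0 = 0 := by simp [loopMomentY, loopY]
lemma loopArea_zero : loopArea 0 = 0 := by simp [loopArea]

lemma loopX_one : loopX 1 = 0 := by simp [loopX]
lemma loopY_one : loopY 1 = 0 := by simp [loopY]
lemma loopMomentX_one : loopMomentX 1 = 0 := by simp [loopMomentX]
lemma loopMomentY_one : loopMomentY 1 = 0 := by simp [loopMomentY, loopY]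
lemma loopArea_one : loopArea 1 = -(π / 2) := by
  have h4 : sin (4 * π) = 0 := by simpa using sin_nat_mul_pi 4
  have h8 : sin (8 * π) = 0 := by simpa using sin_nat_mul_pi 8
  simp [loopArea, h4, h8]

lemma abs_loopXDeriv_le (t : ℝ) : |loopXDeriv t| ≤ 2 * π := by
  rw [loopXDeriv, abs_mul, abs_of_pos (by positivity)]
  exact mul_le_of_le_one_right (by positivity) (abs_cos_le_one _)

lemma abs_loopYDeriv_le (t : ℝ) : |loopYDeriv t| ≤ 6 * π := by
  have hs := abs_le.mp (abs_sin_le_one (2 * π * t))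
  have hsc := sin_sq_add_cos_sq (2 * π * t)
  have h3 : |2 * sin (2 * π * t) * cos (2 * π * t) ^ 2 - sin (2 * π * t) ^ 3| ≤ 3 :=
    abs_le.mpr ⟨by nlinarith [sq_nonneg (cos (2 * π * t)), sq_nonneg (sin (2 * π * t))],
      by nlinarith [sq_nonneg (cos (2 * π * t)), sq_nonneg (sin (2 * π * t))]⟩
  rw [loopYDeriv, abs_mul, abs_of_pos (by positivity)]
  nlinarith [pi_pos]

lemma continuous_loopXDeriv : Continuous loopXDeriv := by unfold loopXDeriv; fun_prop
lemma continuous_loopYDeriv : Continuous loopYDeriv := by unfold loopYDeriv; fun_prop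

section LoopPath

variable {E : Type*} [NormedAddCommGroup E] [NormedSpace ℝ E]

noncomputable def loopPath (e v u : E) (t : ℝ) : E := t • e + loopX t • v + loopY t • u

noncomputable def loopPathDeriv (e v u : E) (t : ℝ) : E :=
  e + loopXDeriv t • v + loopYDeriv t • u

lemma hasDerivAt_loopPath (e v u : E) (t : ℝ) :
    HasDerivAt (loopPath e v u) (loopPathDeriv e v u t) t :=
  ((((hasDerivAt_id t).smul_const e).add ((hasDerivAt_loopX t).smul_const v)).add
    ((hasDerivAt_loopY t).smul_const u)).congr_deriv (by simp [loopPathDeriv])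

lemma continuous_loopPathDeriv (e v u : E) : Continuous (loopPathDeriv e v u) := by
  have := continuous_loopXDeriv
  have := continuous_loopYDeriv
  unfold loopPathDeriv
  fun_prop

lemma loopPath_mem {V : Submodule ℝ E} {e v u : E} (he : e ∈ V) (hv : v ∈ V) (hu : u ∈ V)
    (t : ℝ) : loopPath e v u t ∈ V :=
  V.add_mem (V.add_mem (V.smul_mem _ he) (V.smul_mem _ hv)) (V.smul_mem _ hu)

lemma loopPathDeriv_mem {V : Submodule ℝ E} {e v u : E} (he : e ∈ V) (hv : v ∈ V) (hu : u ∈ V)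
    (t : ℝ) : loopPathDeriv e v u t ∈ V :=
  V.add_mem (V.add_mem he (V.smul_mem _ hv)) (V.smul_mem _ hu)

end LoopPath

namespace HTypeGroup

variable {M : Type*} [NormedAddCommGroup M] [InnerProductSpace ℝ M] [CompleteSpace M]
  (H : HTypeGroup M)

lemma eq_zero_of_mem_V_of_mem_W {m : M} (hV : m ∈ H.V) (hW : m ∈ H.W) : m = 0 :=
  inner_self_eq_zero.mp (H.orthogonal m hV m hW)

lemma proj1_eq_self {m : M} (h : m ∈ H.V) : H.proj1 m = m := by
  have : H.proj2 m = 0 := H.eq_zero_of_mem_V_of_mem_W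
    (by rw [eq_sub_of_add_eq' (H.proj_add m)]; exact H.V.sub_mem h (H.proj1_mem m))
    (H.proj2_mem m)
  simpa [this] using H.proj_add m

lemma proj2_eq_self {m : M} (h : m ∈ H.W) : H.proj2 m = m := by
  have : H.proj1 m = 0 := H.eq_zero_of_mem_V_of_mem_W (H.proj1_mem m)
    (by rw [eq_sub_of_add_eq (H.proj_add m)]; exact H.W.sub_mem h (H.proj2_mem m))
  simpa [this] using H.proj_add m

lemma proj1_eq_zero {m : M} (h : m ∈ H.W) : H.proj1 m = 0 := by
  simpa [H.proj2_eq_self h] using H.proj_add m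

lemma proj2_eq_zero {m : M} (h : m ∈ H.V) : H.proj2 m = 0 := by
  simpa [H.proj1_eq_self h] using H.proj_add m

lemma bracket_self (m : M) : H.bracket m m = 0 := by
  have h := H.bracket_skew m m
  rwa [eq_neg_iff_add_eq_zero, ← two_smul ℝ, smul_eq_zero, or_iff_right two_ne_zero] at h

lemma norm_Jmap_sq {w v : M} (hw : w ∈ H.W) (hv : v ∈ H.V) :
    ‖H.Jmap w v‖ ^ 2 = ‖w‖ ^ 2 * ‖v‖ ^ 2 := by
  have hJv := H.Jmap_mem_V w hw v hv
  rw [← real_inner_self_eq_norm_sq, H.Jmap_inner w hw v hv _ hJv, H.bracket_skew,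
    inner_neg_right, ← H.Jmap_inner w hw _ hJv v hv, H.Jmap_sq w hw v hv, inner_smul_left,
    real_inner_self_eq_norm_sq]
  simp

lemma inner_Jmap_Jmap {w w' v : M} (hw : w ∈ H.W) (hw' : w' ∈ H.W) (hv : v ∈ H.V) :
    ⟪H.Jmap w' v, H.Jmap w v⟫ = ⟪w', w⟫ * ‖v‖ ^ 2 := by
  have h := H.norm_Jmap_sq (H.W.add_mem hw' hw) hv
  rw [map_add, add_apply, norm_add_sq_real, norm_add_sq_real,
    H.norm_Jmap_sq hw hv, H.norm_Jmap_sq hw' hv] at h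
  linarith

lemma bracket_Jmap {w v : M} (hw : w ∈ H.W) (hv : v ∈ H.V) :
    H.bracket v (H.Jmap w v) = (‖v‖ ^ 2) • w := by
  have hD : H.bracket v (H.Jmap w v) - (‖v‖ ^ 2) • w ∈ H.W :=
    H.W.sub_mem (H.bracket_mem_W _ _) (H.W.smul_mem _ hw)
  have hperp : ∀ w' ∈ H.W, ⟪w', H.bracket v (H.Jmap w v) - (‖v‖ ^ 2) • w⟫ = 0 := by
    intro w' hw'
    rw [inner_sub_right, real_inner_smul_right,
      ← H.Jmap_inner w' hw' v hv _ (H.Jmap_mem_V w hw v hv), H.inner_Jmap_Jmap hw hw' hv]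
    ring
  exact sub_eq_zero.mp (inner_self_eq_zero.mp (hperp _ hD))

lemma exists_bracket_eq {w v : M} (hw : w ∈ H.W) (hv : v ∈ H.V) (hv0 : v ≠ 0) :
    ∃ u ∈ H.V, H.bracket v u = w ∧ ‖u‖ = ‖w‖ / ‖v‖ := by
  have hnv : ‖v‖ ≠ 0 := norm_ne_zero_iff.mpr hv0
  refine ⟨(‖v‖ ^ 2)⁻¹ • H.Jmap w v, H.V.smul_mem _ (H.Jmap_mem_V w hw v hv), ?_, ?_⟩
  · rw [map_smul, H.bracket_Jmap hw hv, smul_smul, inv_mul_cancel₀ (pow_ne_zero 2 hnv),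
      one_smul]
  · have h := H.norm_Jmap_sq hw hv
    rw [← mul_pow, sq_eq_sq₀ (norm_nonneg _) (by positivity)] at h
    rw [norm_smul, h, norm_inv, norm_pow, norm_norm]
    field_simp

variable {S₀ : M → ℝ}

def horizontalSeminorm (hS_add : ∀ u ∈ H.V, ∀ v ∈ H.V, S₀ (u + v) ≤ S₀ u + S₀ v)
    (hS_smul : ∀ (c : ℝ), ∀ v ∈ H.V, S₀ (c • v) = |c| * S₀ v) : Seminorm ℝ M :=
  Seminorm.of (fun m => S₀ (H.proj1 m))
    (fun a b => by simpa using hS_add _ (H.proj1_mem a) _ (H.proj1_mem b))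
    (fun c m => by simpa using hS_smul c _ (H.proj1_mem m))

section

variable (hS_add : ∀ u ∈ H.V, ∀ v ∈ H.V, S₀ (u + v) ≤ S₀ u + S₀ v)
  (hS_smul : ∀ (c : ℝ), ∀ v ∈ H.V, S₀ (c • v) = |c| * S₀ v)

lemma horizontalSeminorm_apply (m : M) :
    H.horizontalSeminorm hS_add hS_smul m = S₀ (H.proj1 m) :=
  rfl

lemma horizontalSeminorm_of_mem_V {m : M} (hm : m ∈ H.V) :
    H.horizontalSeminorm hS_add hS_smul m = S₀ m := by
  rw [horizontalSeminorm_apply, H.proj1_eq_self hm]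

lemma continuous_horizontalSeminorm {c₀ : ℝ} (hS_cont : ∀ v ∈ H.V, S₀ v ≤ c₀ * ‖v‖) :
    Continuous (H.horizontalSeminorm hS_add hS_smul) := by
  refine Seminorm.continuous_of_le (q := (normSeminorm ℝ M).comp (c₀ • H.proj1).toLinearMap)
    (c₀ • H.proj1).continuous.norm fun m => ?_
  simpa [horizontalSeminorm_apply, norm_smul] using
    (hS_cont _ (H.proj1_mem m)).trans (mul_le_mul_of_nonneg_right (le_abs_self c₀) (norm_nonneg _))

lemma subFinslerLength_eq_integral (γ : PC1Curve M) :
    subFinslerLength H S₀ γ = ∫ t in (0 : ℝ)..1, H.horizontalSeminorm hS_add hS_smul (γ.deriv t) :=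
  rfl

end

lemma subFinslerLength_nonneg (hS_add : ∀ u ∈ H.V, ∀ v ∈ H.V, S₀ (u + v) ≤ S₀ u + S₀ v)
    (hS_smul : ∀ (c : ℝ), ∀ v ∈ H.V, S₀ (c • v) = |c| * S₀ v) (γ : PC1Curve M) :
    0 ≤ subFinslerLength H S₀ γ := by
  rw [H.subFinslerLength_eq_integral hS_add hS_smul]
  exact intervalIntegral.integral_nonneg zero_le_one fun _ _ => apply_nonneg _ _

lemma subFinslerDist_le (hS_add : ∀ u ∈ H.V, ∀ v ∈ H.V, S₀ (u + v) ≤ S₀ u + S₀ v)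
    (hS_smul : ∀ (c : ℝ), ∀ v ∈ H.V, S₀ (c • v) = |c| * S₀ v) {p p' : M} {γ : PC1Curve M}
    (hγ : IsHorizontal H γ) (h0 : γ.toFun 0 = p) (h1 : γ.toFun 1 = p') :
    subFinslerDist H S₀ p p' ≤ subFinslerLength H S₀ γ :=
  csInf_le ⟨0, by rintro _ ⟨γ', -, -, -, rfl⟩; exact H.subFinslerLength_nonneg hS_add hS_smul γ'⟩
    ⟨γ, hγ, h0, h1, rfl⟩

lemma le_subFinslerDist (hS_add : ∀ u ∈ H.V, ∀ v ∈ H.V, S₀ (u + v) ≤ S₀ u + S₀ v)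
    (hS_smul : ∀ (c : ℝ), ∀ v ∈ H.V, S₀ (c • v) = |c| * S₀ v) {c₀ : ℝ}
    (hS_cont : ∀ v ∈ H.V, S₀ v ≤ c₀ * ‖v‖) {p p' : M}
    (hne : ∃ γ : PC1Curve M, IsHorizontal H γ ∧ γ.toFun 0 = p ∧ γ.toFun 1 = p') :
    S₀ (H.proj1 (p' - p)) ≤ subFinslerDist H S₀ p p' := by
  obtain ⟨γ, hγ⟩ := hne
  refine le_csInf ⟨_, γ, hγ.1, hγ.2.1, hγ.2.2, rfl⟩ ?_
  rintro _ ⟨γ', -, rfl, rfl, rfl⟩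
  rw [H.subFinslerLength_eq_integral hS_add hS_smul]
  exact γ'.seminorm_sub_le_integral (H.continuous_horizontalSeminorm hS_add hS_smul hS_cont)

/-- The horizontal curve through `p` whose `V`-component is `π₁ p + a`: when `b` is a primitive
of `½[a, a']`, the `W`-component `π₂ p + ½[π₁ p, a] + b` solves `γ₂' = ½[γ₁, γ₁']`. -/
noncomputable def liftCurve (p : M) {a a' b : ℝ → M} (ha : ∀ t, HasDerivAt a (a' t) t)
    (ha' : Continuous a')
    (hb : ∀ t, HasDerivAt b ((2⁻¹ : ℝ) • H.bracket (a t) (a' t)) t) : PC1Curve M :=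
  PC1Curve.ofHasDerivAt (f := fun t => p + a t + (2⁻¹ : ℝ) • H.bracket (H.proj1 p) (a t) + b t)
    (fun t => (((ha t).const_add p).add
      (((H.bracket (H.proj1 p)).hasFDerivAt.comp_hasDerivAt t (ha t)).const_smul _)).add (hb t))
    (by
      have ha_cont : Continuous a := continuous_iff_continuousAt.2 fun t => (ha t).continuousAt
      fun_prop)

section

variable {H} {p : M} {a a' b : ℝ → M} {ha : ∀ t, HasDerivAt a (a' t) t} {ha' : Continuous a'}
  {hb : ∀ t, HasDerivAt b ((2⁻¹ : ℝ) • H.bracket (a t) (a' t)) t}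

lemma liftCurve_zero (ha0 : a 0 = 0) (hb0 : b 0 = 0) : (H.liftCurve p ha ha' hb).toFun 0 = p := by
  simp [liftCurve, PC1Curve.ofHasDerivAt, ha0, hb0]

lemma proj1_liftCurve_deriv (ha'V : ∀ t, a' t ∈ H.V) (t : ℝ) :
    H.proj1 ((H.liftCurve p ha ha' hb).deriv t) = a' t := by
  simp [liftCurve, PC1Curve.ofHasDerivAt, H.proj1_eq_self (ha'V t),
    H.proj1_eq_zero (H.bracket_mem_W _ _)]

lemma isHorizontal_liftCurve (haV : ∀ t, a t ∈ H.V) (ha'V : ∀ t, a' t ∈ H.V)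
    (hbW : ∀ t, b t ∈ H.W) : IsHorizontal H (H.liftCurve p ha ha' hb) := by
  intro t _
  rw [proj1_liftCurve_deriv ha'V]
  simp [liftCurve, PC1Curve.ofHasDerivAt, H.proj1_eq_self (haV t), H.proj1_eq_zero (hbW t),
    H.proj1_eq_zero (H.bracket_mem_W _ _), H.proj2_eq_zero (ha'V t),
    H.proj2_eq_self (H.bracket_mem_W _ _), smul_add]

end

noncomputable def loopSweep (e v u : M) (t : ℝ) : M :=
  (2⁻¹ : ℝ) • (loopMomentX t • H.bracket e v + loopMomentY t • H.bracket e u +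
    loopArea t • H.bracket v u)

lemma bracket_loopPath (e v u : M) (t : ℝ) :
    H.bracket (loopPath e v u t) (loopPathDeriv e v u t) =
      (t * loopXDeriv t - loopX t) • H.bracket e v + (t * loopYDeriv t - loopY t) • H.bracket e u
        + (loopX t * loopYDeriv t - loopY t * loopXDeriv t) • H.bracket v u := by
  simp only [loopPath, loopPathDeriv, map_add, map_smul, add_apply, smul_apply, H.bracket_self,
    H.bracket_skew v e, H.bracket_skew u e, H.bracket_skew u v]
  module

lemma hasDerivAt_loopSweep (e v u : M) (t : ℝ) :
    HasDerivAt (H.loopSweep e v u)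
      ((2⁻¹ : ℝ) • H.bracket (loopPath e v u t) (loopPathDeriv e v u t)) t := by
  rw [H.bracket_loopPath]
  exact ((((hasDerivAt_loopMomentX t).smul_const (H.bracket e v)).add
    ((hasDerivAt_loopMomentY t).smul_const (H.bracket e u))).add
    ((hasDerivAt_loopArea t).smul_const (H.bracket v u))).const_smul (2⁻¹ : ℝ)

noncomputable def loopCurve (p e v u : M) : PC1Curve M :=
  H.liftCurve p (hasDerivAt_loopPath e v u) (continuous_loopPathDeriv e v u)
    (H.hasDerivAt_loopSweep e v u)

lemma loopCurve_zero (p e v u : M) : (H.loopCurve p e v u).toFun 0 = p :=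
  liftCurve_zero (by simp [loopPath, loopX_zero, loopY_zero])
    (by simp [loopSweep, loopMomentX_zero, loopMomentY_zero, loopArea_zero])

lemma loopCurve_one (p e v u : M) : (H.loopCurve p e v u).toFun 1 =
    p + e + (2⁻¹ : ℝ) • H.bracket (H.proj1 p) e - (π / 4) • H.bracket v u := by
  simp only [loopCurve, liftCurve, PC1Curve.ofHasDerivAt, loopPath, loopSweep, loopX_one,
    loopY_one, loopMomentX_one, loopMomentY_one, loopArea_one, one_smul, zero_smul, add_zero,
    zero_add]
  module

variable {H}

lemma isHorizontal_loopCurve (p : M) {e v u : M} (he : e ∈ H.V) (hv : v ∈ H.V) (hu : u ∈ H.V) :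
    IsHorizontal H (H.loopCurve p e v u) :=
  isHorizontal_liftCurve (loopPath_mem he hv hu) (loopPathDeriv_mem he hv hu)
    (fun _ => H.W.smul_mem _ (H.W.add_mem (H.W.add_mem (H.W.smul_mem _ (H.bracket_mem_W _ _))
      (H.W.smul_mem _ (H.bracket_mem_W _ _))) (H.W.smul_mem _ (H.bracket_mem_W _ _))))

lemma subFinslerLength_loopCurve_le
    (hS_add : ∀ u ∈ H.V, ∀ v ∈ H.V, S₀ (u + v) ≤ S₀ u + S₀ v)
    (hS_smul : ∀ (c : ℝ), ∀ v ∈ H.V, S₀ (c • v) = |c| * S₀ v)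
    (p : M) {e v u : M} (he : e ∈ H.V) (hv : v ∈ H.V) (hu : u ∈ H.V) :
    subFinslerLength H S₀ (H.loopCurve p e v u) ≤ S₀ e + 2 * π * S₀ v + 6 * π * S₀ u := by
  set q := H.horizontalSeminorm hS_add hS_smul
  have hq : ∀ m ∈ H.V, q m = S₀ m := fun m hm => H.horizontalSeminorm_of_mem_V hS_add hS_smul hm
  have hpt : ∀ t, q ((H.loopCurve p e v u).deriv t) ≤ q e + 2 * π * q v + 6 * π * q u := by
    intro t
    have hproj : H.proj1 ((H.loopCurve p e v u).deriv t) = loopPathDeriv e v u t :=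
      proj1_liftCurve_deriv (loopPathDeriv_mem he hv hu) t
    rw [horizontalSeminorm_apply, hproj, ← hq _ (loopPathDeriv_mem he hv hu t)]
    calc q (loopPathDeriv e v u t)
        ≤ q e + ‖loopXDeriv t‖ * q v + ‖loopYDeriv t‖ * q u := by
          rw [loopPathDeriv, ← map_smul_eq_mul, ← map_smul_eq_mul]
          exact (map_add_le_add q _ _).trans (add_le_add_left (map_add_le_add q _ _) _)
      _ ≤ q e + 2 * π * q v + 6 * π * q u := by
          gcongr
          exacts [abs_loopXDeriv_le t, abs_loopYDeriv_le t]
  have hint := intervalIntegral.norm_integral_le_of_norm_le_const (a := 0) (b := 1)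
    fun t _ => (Real.norm_of_nonneg (apply_nonneg q _)).trans_le (hpt t)
  rw [H.subFinslerLength_eq_integral hS_add hS_smul, ← hq e he, ← hq v hv, ← hq u hu]
  simpa using (le_abs_self _).trans hint

lemma exists_isHorizontal_length_le
    (hS_add : ∀ u ∈ H.V, ∀ v ∈ H.V, S₀ (u + v) ≤ S₀ u + S₀ v)
    (hS_smul : ∀ (c : ℝ), ∀ v ∈ H.V, S₀ (c • v) = |c| * S₀ v)
    {c₀ : ℝ} (hS_cont : ∀ v ∈ H.V, S₀ v ≤ c₀ * ‖v‖) {x y z₁ z₂ v : M} (hx : x ∈ H.V)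
    (hy : y ∈ H.V) (hz₁ : z₁ ∈ H.W) (hz₂ : z₂ ∈ H.W) (hv : v ∈ H.V) (hv0 : v ≠ 0) :
    ∃ γ : PC1Curve M, IsHorizontal H γ ∧ γ.toFun 0 = x + z₁ ∧ γ.toFun 1 = y + z₂ ∧
      subFinslerLength H S₀ γ ≤
        S₀ (y - x) + 2 * π * S₀ v + 24 * c₀ * ‖z₂ - z₁ - (2⁻¹ : ℝ) • H.bracket x y‖ / ‖v‖ := by
  set w := z₂ - z₁ - (2⁻¹ : ℝ) • H.bracket x y with hw_def
  have hw : (-(4 / π)) • w ∈ H.W :=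
    H.W.smul_mem _ (H.W.sub_mem (H.W.sub_mem hz₂ hz₁) (H.W.smul_mem _ (H.bracket_mem_W x y)))
  obtain ⟨u, hu, hvu, hnu⟩ := H.exists_bracket_eq hw hv hv0
  refine ⟨H.loopCurve (x + z₁) (y - x) v u, isHorizontal_loopCurve _ (H.V.sub_mem hy hx) hv hu,
    H.loopCurve_zero .., ?_, ?_⟩
  · rw [loopCurve_one, hvu, smul_smul, show π / 4 * -(4 / π) = -1 by field_simp, map_add,
      H.proj1_eq_self hx, H.proj1_eq_zero hz₁, add_zero, map_sub, H.bracket_self, hw_def]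
    module
  · refine (subFinslerLength_loopCurve_le hS_add hS_smul _ (H.V.sub_mem hy hx) hv hu).trans ?_
    have hSu : 6 * π * S₀ u ≤ 24 * c₀ * ‖w‖ / ‖v‖ := by
      calc 6 * π * S₀ u ≤ 6 * π * (c₀ * ‖u‖) := by gcongr; exact hS_cont u hu
        _ = 24 * c₀ * ‖w‖ / ‖v‖ := by
          rw [hnu, norm_smul, norm_neg, Real.norm_of_nonneg (by positivity)]
          field_simp
          ring
    linarith

lemma exists_isHorizontal_vertical_length_le
    (hS_add : ∀ u ∈ H.V, ∀ v ∈ H.V, S₀ (u + v) ≤ S₀ u + S₀ v)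
    (hS_smul : ∀ (c : ℝ), ∀ v ∈ H.V, S₀ (c • v) = |c| * S₀ v)
    {c₀ : ℝ} (hc₀ : 0 < c₀) (hS_cont : ∀ v ∈ H.V, S₀ v ≤ c₀ * ‖v‖)
    (h_strictly_weak : ¬ ∃ c > (0 : ℝ), ∀ v ∈ H.V, c * ‖v‖ ≤ S₀ v)
    {x z₁ z₂ : M} (hx : x ∈ H.V) (hz₁ : z₁ ∈ H.W) (hz₂ : z₂ ∈ H.W) {δ : ℝ} (hδ : 0 < δ) :
    ∃ γ : PC1Curve M, IsHorizontal H γ ∧ γ.toFun 0 = x + z₁ ∧ γ.toFun 1 = x + z₂ ∧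
      subFinslerLength H S₀ γ ≤ δ := by
  set K := 2 * π + 24 * c₀ * ‖z₂ - z₁ - (2⁻¹ : ℝ) • H.bracket x x‖ with hK_def
  obtain ⟨ε, hε, hKε⟩ : ∃ ε, 0 < ε ∧ K * ε = δ :=
    ⟨δ / K, by positivity, mul_div_cancel₀ δ (by positivity)⟩
  obtain ⟨v, hv, hSv, hnv⟩ := exists_mem_lt_and_mul_norm_eq_one hS_smul h_strictly_weak hε
  have hv0 : v ≠ 0 := by rintro rfl; simp at hnv
  obtain ⟨γ, hγ, h0, h1, hlen⟩ :=
    exists_isHorizontal_length_le hS_add hS_smul hS_cont hx hx hz₁ hz₂ hv hv0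
  refine ⟨γ, hγ, h0, h1, hlen.trans ?_⟩
  have hSv' := mul_le_mul_of_nonneg_left hSv.le (by positivity : (0 : ℝ) ≤ 2 * π)
  rw [sub_self, apply_zero_of_abs_homogeneous hS_smul, div_eq_mul_inv,
    ← (eq_inv_of_mul_eq_one_left hnv), ← hKε, hK_def]
  linarith

end HTypeGroup

/-- For a strictly weak, left invariant sub-Finsler metric `S₀` on a
Hilbertian H-type group `M = V ⊕ W`, for all `x, y ∈ V` and `z₁, z₂ ∈ W` one has
`ρ_S(x + z₁, y + z₂) = 0` if and only if `x = y`. -/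
theorem statement_9 {M : Type*} [NormedAddCommGroup M] [InnerProductSpace ℝ M]
    [CompleteSpace M] (H : HTypeGroup M) (S₀ : M → ℝ)
    (hS_add : ∀ u ∈ H.V, ∀ v ∈ H.V, S₀ (u + v) ≤ S₀ u + S₀ v)
    (hS_smul : ∀ (c : ℝ), ∀ v ∈ H.V, S₀ (c • v) = |c| * S₀ v)
    (hS_def : ∀ v ∈ H.V, S₀ v = 0 → v = 0)
    (c₀ : ℝ) (hc₀ : 0 < c₀) (hS_cont : ∀ v ∈ H.V, S₀ v ≤ c₀ * ‖v‖)
    (h_strictly_weak : ¬ ∃ c > (0 : ℝ), ∀ v ∈ H.V, c * ‖v‖ ≤ S₀ v) :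
    ∀ x ∈ H.V, ∀ y ∈ H.V, ∀ z₁ ∈ H.W, ∀ z₂ ∈ H.W,
      (subFinslerDist H S₀ (x + z₁) (y + z₂) = 0 ↔ x = y) := by
  intro x hx y hy z₁ hz₁ z₂ hz₂
  have hyx : y - x ∈ H.V := H.V.sub_mem hy hx
  have hlow : S₀ (y - x) ≤ subFinslerDist H S₀ (x + z₁) (y + z₂) := by
    -- `ρ_S` is an `sInf`, which is `0` for the empty set: a connecting curve is needed here.
    obtain ⟨v, hv, hv0⟩ := Submodule.exists_mem_ne_zero_of_ne_bot H.V_nontrivial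
    obtain ⟨γ, hγ, h0, h1, -⟩ :=
      H.exists_isHorizontal_length_le hS_add hS_smul hS_cont hx hy hz₁ hz₂ hv hv0
    have hproj : H.proj1 (y + z₂ - (x + z₁)) = y - x := by
      simp [H.proj1_eq_self hx, H.proj1_eq_self hy, H.proj1_eq_zero hz₁, H.proj1_eq_zero hz₂]
    simpa [hproj] using H.le_subFinslerDist hS_add hS_smul hS_cont ⟨γ, hγ, h0, h1⟩
  constructor
  · intro hdist
    have hS : S₀ (y - x) = 0 := le_antisymm (hdist ▸ hlow)
      (H.horizontalSeminorm_of_mem_V hS_add hS_smul hyx ▸ apply_nonneg _ _)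
    exact (sub_eq_zero.mp (hS_def _ hyx hS)).symm
  · rintro rfl
    refine le_antisymm (le_of_forall_gt_imp_ge_of_dense fun δ hδ => ?_) ?_
    · obtain ⟨γ, hγ, h0, h1, hlen⟩ := H.exists_isHorizontal_vertical_length_le hS_add hS_smul hc₀
        hS_cont h_strictly_weak hx hz₁ hz₂ hδ
      exact (H.subFinslerDist_le hS_add hS_smul hγ h0 h1).trans hlen
    · simpa [apply_zero_of_abs_homogeneous hS_smul] using hlow
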